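/- arXiv:2304.14575 — 2 statements merged into one kernel-verified Lean document; each statement's English description precedes it below -/
import Mathlib

section
/- There exists a predicate P on partial-recursive codes (Nat.Partrec.Code) such that: (i) P is extensional with respect to running time, i.e., for any two codes c₁, c₂, if for every input n the running time of c₁ on n equals the running time of c₂ on n (as elements of ℕ∞, where the running time of c on n is defined as the least fuel value k such that Nat.Partrec.Code.evaln k c n is some value, and ⊤ if no such k exists), then P c₁ ↔ P c₂; (ii) P is nontrivial, i.e., some code satisfies P and some code does not; and (iii) P is a computable predicate (ComputablePred P). (This refutes the claim that every nontrivial property of the time complexity of a program is undecidable.) -/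
/-! Whether a code halts within a *fixed* time bound on a *fixed* input is decided by running it
with that much fuel, so such a property of the running time is computable; it is nontrivial
because some codes halt at once and others do not. -/

/-- The running time of a partial-recursive code `c` on input `n`:
the least fuel `k` such that `Nat.Partrec.Code.evaln k c n` is `some`,
or `⊤` if `c` never halts on `n`. -/
noncomputable def timeToHalt (c : Nat.Partrec.Code) (n : ℕ) : ℕ∞ :=
  ⨅ (k : ℕ) (_ : (Nat.Partrec.Code.evaln k c n).isSome), (k : ℕ∞)

open Nat.Partrec

theorem Nat.Partrec.Code.isSome_evaln_mono {c : Code} {n k₁ k₂ : ℕ} (hk : k₁ ≤ k₂)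
    (h : (Code.evaln k₁ c n).isSome) : (Code.evaln k₂ c n).isSome := by
  obtain ⟨x, hx⟩ := Option.isSome_iff_exists.mp h
  exact Option.isSome_iff_exists.mpr ⟨x, Code.evaln_mono hk hx⟩

theorem timeToHalt_le_iff_isSome_evaln {c : Code} {n k : ℕ} :
    timeToHalt c n ≤ k ↔ (Code.evaln k c n).isSome := by
  refine ⟨fun h => ?_, fun h => iInf₂_le k h⟩
  obtain ⟨j, hj, hjk⟩ : ∃ j : ℕ, (Code.evaln j c n).isSome ∧ (j : ℕ∞) < k + 1 := by
    simpa only [timeToHalt, iInf_lt_iff, exists_prop] using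
      h.trans_lt (ENat.natCast_lt_add_one_iff.mpr le_rfl)
  exact Code.isSome_evaln_mono (by exact_mod_cast ENat.natCast_lt_add_one_iff.mp hjk) hj

theorem computablePred_timeToHalt_le (n k : ℕ) :
    ComputablePred fun c => timeToHalt c n ≤ k := by
  refine ComputablePred.computable_iff.mpr ⟨fun c => (Code.evaln k c n).isSome, ?_, ?_⟩
  · exact (Primrec.option_isSome.comp <| Code.primrec_evaln.comp <|
      ((Primrec.const k).pair Primrec.id).pair (Primrec.const n)).to_comp
  · exact funext fun c => propext timeToHalt_le_iff_isSome_evaln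

theorem timeToHalt_zero_le_one : timeToHalt Code.zero 0 ≤ 1 := by
  have : (Code.evaln 1 .zero 0).isSome := by simp [Code.evaln]
  simpa using timeToHalt_le_iff_isSome_evaln.mpr this

-- `rfind' succ` searches for a zero of `succ`; one unit of fuel covers only its first test.
theorem one_lt_timeToHalt_rfind'_succ : 1 < timeToHalt (Code.rfind' Code.succ) 0 := by
  have : ¬(Code.evaln 1 (.rfind' .succ) 0).isSome := by simp [Code.evaln, Nat.pair]
  simpa using mt timeToHalt_le_iff_isSome_evaln.mp this

/-- There is a nontrivial, computable (decidable) property of codes that is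
extensional with respect to running time. -/
theorem exists_nontrivial_computable_time_property :
    ∃ P : Nat.Partrec.Code → Prop,
      (∀ c₁ c₂ : Nat.Partrec.Code,
          (∀ n : ℕ, timeToHalt c₁ n = timeToHalt c₂ n) → (P c₁ ↔ P c₂)) ∧
      (∃ c, P c) ∧ (∃ c, ¬ P c) ∧ ComputablePred P :=
  ⟨fun c => timeToHalt c 0 ≤ 1, fun _ _ h => by simp only [h 0], ⟨_, timeToHalt_zero_le_one⟩,
    ⟨_, not_le.mpr one_lt_timeToHalt_rfind'_succ⟩, by simpa using computablePred_timeToHalt_le 0 1⟩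
end

section
/- Let M be a Turing machine in Mathlib's TM0 model with step function step : Cfg → Option Cfg. If the computation starting from a configuration c₀ halts (i.e., some finite iterate of the step function from c₀ returns none), then all configurations occurring along the run from c₀ up to the halting point are pairwise distinct. -/
/-! The step function is deterministic, so a run that revisits a configuration repeats the
same cycle forever and never halts. -/

/-- Iterate the TM0 step function `n` times from configuration `c`;
`none` means the machine halted at some point within the first `n` steps. -/
def multistep {Γ Λ : Type} [Inhabited Γ] [Inhabited Λ] (M : Turing.TM0.Machine Γ Λ)
    (c : Turing.TM0.Cfg Γ Λ) : ℕ → Option (Turing.TM0.Cfg Γ Λ)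
  | 0 => some c
  | n + 1 => (multistep M c n).bind (Turing.TM0.step M)

section

variable {Γ Λ : Type} [Inhabited Γ] [Inhabited Λ] (M : Turing.TM0.Machine Γ Λ)

theorem multistep_add (c : Turing.TM0.Cfg Γ Λ) (m k : ℕ) :
    multistep M c (m + k) = (multistep M c m).bind fun d => multistep M d k := by
  induction k with
  | zero => cases multistep M c m <;> rfl
  | succ k ih => rw [← Nat.add_assoc, multistep, ih, Option.bind_assoc]; rfl

theorem multistep_add_of_eq_some {c d : Turing.TM0.Cfg Γ Λ} {m : ℕ}
    (h : multistep M c m = some d) (k : ℕ) : multistep M c (m + k) = multistep M d k := by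
  rw [multistep_add, h, Option.bind_some]

theorem multistep_eq_none_of_le {c : Turing.TM0.Cfg Γ Λ} {t s : ℕ}
    (h : multistep M c t = none) (hts : t ≤ s) : multistep M c s = none := by
  obtain ⟨k, rfl⟩ := Nat.exists_eq_add_of_le hts
  rw [multistep_add, h, Option.bind_none]

theorem multistep_mul_of_cycle {c : Turing.TM0.Cfg Γ Λ} {p : ℕ}
    (h : multistep M c p = some c) (k : ℕ) : multistep M c (k * p) = some c := by
  induction k with
  | zero => rw [Nat.zero_mul]; rfl
  | succ k ih => rw [Nat.succ_mul, multistep_add_of_eq_some M ih, h]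

theorem multistep_ne_none_of_revisit {c d : Turing.TM0.Cfg Γ Λ} {i j : ℕ}
    (hi : multistep M c i = some d) (hj : multistep M c j = some d) (hij : i < j) (n : ℕ) :
    multistep M c n ≠ none := by
  have hcycle : multistep M d (j - i) = some d := by
    rw [← multistep_add_of_eq_some M hi, Nat.add_sub_cancel' hij.le, hj]
  have hlate : multistep M c (i + n * (j - i)) = some d := by
    rw [multistep_add_of_eq_some M hi, multistep_mul_of_cycle M hcycle]
  have hle : n ≤ i + n * (j - i) :=
    (Nat.le_mul_of_pos_right n (Nat.sub_pos_of_lt hij)).trans (Nat.le_add_left _ _)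
  intro hn
  rw [multistep_eq_none_of_le M hn hle] at hlate
  cases hlate

end

/-- If the computation starting from `c₀` halts, then all configurations
occurring along the run up to the halting point are pairwise distinct. -/
theorem halting_run_configs_distinct {Γ Λ : Type} [Inhabited Γ] [Inhabited Λ]
    (M : Turing.TM0.Machine Γ Λ) (c₀ : Turing.TM0.Cfg Γ Λ)
    (hhalt : ∃ t : ℕ, multistep M c₀ t = none) :
    ∀ (i j : ℕ) (ci cj : Turing.TM0.Cfg Γ Λ),
      multistep M c₀ i = some ci → multistep M c₀ j = some cj →
      i ≠ j → ci ≠ cj := by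
  intro i j ci cj hi hj hij heq
  subst heq
  obtain ⟨t, ht⟩ := hhalt
  rcases hij.lt_or_gt with h | h
  · exact multistep_ne_none_of_revisit M hi hj h t ht
  · exact multistep_ne_none_of_revisit M hj hi h t ht
end
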